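/- arXiv:1704.00404 — 5 statements merged into one kernel-verified Lean document; each statement's English description precedes it below -/
import Mathlib

section
/- Let N be a positive integer, a_i nonzero real numbers and b_i real numbers for i=1,...,N, and let λ_j, λ_k, χ_{j,s}, χ_{k,l} be complex numbers with χ_{j,s} ≠ -b_i and χ_{k,l} ≠ -b_i for all i. If χ_{j,s} - λ_j - Σ_{i=1}^N a_i²/(χ_{j,s}+b_i) = 0 and χ_{k,l} - λ_k - Σ_{i=1}^N a_i²/(χ_{k,l}+b_i) = 0, and moreover conj(χ_{k,l}) ≠ χ_{j,s}, then (conj(λ_k) - λ_j)/(conj(χ_{k,l}) - χ_{j,s}) = 1 + Σ_{i=1}^N a_i²/((χ_{j,s}+b_i)(conj(χ_{k,l})+b_i)). -/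
/-!
Solving the characteristic equation for `λ` makes `λ` a rational function of `χ` whose
coefficients are real, so conjugation commutes with it and `conj λ_k` is the same function at
`conj χ_{k,l}`. Its difference quotient is computed termwise from
`w/(x+b) - w/(y+b) = (y-x) w/((x+b)(y+b))`.
-/

open Complex

section
variable {K ι : Type*} [Field K] [Fintype ι]

/-- `λ` solved from the characteristic equation `χ - λ - ∑ i, w i / (χ + b i) = 0`. -/
def lambdaOfChi (w b : ι → K) (χ : K) : K := χ - ∑ i, w i / (χ + b i)

theorem lambdaOfChi_sub_lambdaOfChi (w b : ι → K) {x y : K}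
    (hx : ∀ i, x + b i ≠ 0) (hy : ∀ i, y + b i ≠ 0) :
    lambdaOfChi w b y - lambdaOfChi w b x =
      (y - x) * (1 + ∑ i, w i / ((x + b i) * (y + b i))) := by
  have hterm : ∀ i, w i / (x + b i) - w i / (y + b i) =
      (y - x) * (w i / ((x + b i) * (y + b i))) := fun i => by
    field_simp [hx i, hy i]
    ring
  rw [lambdaOfChi, lambdaOfChi, mul_add, mul_one, Finset.mul_sum, ← Finset.sum_congr rfl
    (fun i _ => hterm i), Finset.sum_sub_distrib]
  ring

theorem map_lambdaOfChi (f : K →+* K) {w b : ι → K} (hw : ∀ i, f (w i) = w i)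
    (hb : ∀ i, f (b i) = b i) (χ : K) :
    f (lambdaOfChi w b χ) = lambdaOfChi w b (f χ) := by
  simp [lambdaOfChi, map_sum, hw, hb]

end

theorem prop1_darboux_identity_general
    (N : ℕ) (a b : Fin N → ℝ)
    (lamj lamk χjs χkl : ℂ)
    (hjs : ∀ i, χjs ≠ -(b i : ℂ)) (hkl : ∀ i, χkl ≠ -(b i : ℂ))
    (h1 : χjs - lamj - ∑ i, (a i : ℂ)^2 / (χjs + (b i : ℂ)) = 0)
    (h2 : χkl - lamk - ∑ i, (a i : ℂ)^2 / (χkl + (b i : ℂ)) = 0)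
    (hne : (starRingEnd ℂ) χkl ≠ χjs) :
    ((starRingEnd ℂ) lamk - lamj) / ((starRingEnd ℂ) χkl - χjs) =
      1 + ∑ i, (a i : ℂ)^2 / ((χjs + (b i : ℂ)) * ((starRingEnd ℂ) χkl + (b i : ℂ))) := by
  set w : Fin N → ℂ := fun i => (a i : ℂ) ^ 2
  set b' : Fin N → ℂ := fun i => (b i : ℂ)
  have hj : lamj = lambdaOfChi w b' χjs := by
    rw [lambdaOfChi]; linear_combination -h1
  have hk : (starRingEnd ℂ) lamk = lambdaOfChi w b' ((starRingEnd ℂ) χkl) := by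
    rw [← map_lambdaOfChi _ (fun i => by simp [w]) (fun i => by simp [b'])]
    congr 1
    rw [lambdaOfChi]; linear_combination -h2
  have hjs' : ∀ i, χjs + b' i ≠ 0 := fun i h => hjs i (eq_neg_of_add_eq_zero_left h)
  have hkl' : ∀ i, (starRingEnd ℂ) χkl + b' i ≠ 0 := fun i h =>
    hkl i (by simpa [b'] using congrArg (starRingEnd ℂ) (eq_neg_of_add_eq_zero_left h))
  rw [hj, hk, lambdaOfChi_sub_lambdaOfChi w b' hjs' hkl',
    mul_div_cancel_left₀ _ (sub_ne_zero.mpr hne)]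

theorem prop1_darboux_identity
    (N : ℕ) (hN : 0 < N) (a b : Fin N → ℝ) (ha : ∀ i, a i ≠ 0)
    (lamj lamk χjs χkl : ℂ)
    (hjs : ∀ i, χjs ≠ -(b i : ℂ)) (hkl : ∀ i, χkl ≠ -(b i : ℂ))
    (h1 : χjs - lamj - ∑ i, (a i : ℂ)^2 / (χjs + (b i : ℂ)) = 0)
    (h2 : χkl - lamk - ∑ i, (a i : ℂ)^2 / (χkl + (b i : ℂ)) = 0)
    (hne : (starRingEnd ℂ) χkl ≠ χjs) :
    ((starRingEnd ℂ) lamk - lamj) / ((starRingEnd ℂ) χkl - χjs) =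
      1 + ∑ i, (a i : ℂ)^2 / ((χjs + (b i : ℂ)) * ((starRingEnd ℂ) χkl + (b i : ℂ))) :=
  prop1_darboux_identity_general N a b lamj lamk χjs χkl hjs hkl h1 h2 hne
end

section
/- Let a₁ = a₂ = 1, b₁ = β, b₂ = -β with β a real number, and let α be a complex number. Then the complex numbers χ_{1,±} = -α/2 ± (1/2)√(α² + 4β² - 4 + 4√((α²-4)β² + 1)) and χ_{2,±} = -α/2 ± (1/2)√(α² + 4β² - 4 - 4√((α²-4)β² + 1)) are exactly the four roots of the quartic equation obtained by clearing denominators in 1 + 1/((χ+β)(χ+α+β)) + 1/((χ-β)(χ+α-β)) = 0, i.e., of (χ+β)(χ+α+β)(χ-β)(χ+α-β) + (χ-β)(χ+α-β) + (χ+β)(χ+α+β) = 0. -/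
/-! In the variable `t = 2χ + α` the quartic is biquadratic: since
`(χ + β)(χ + α + β) = ((t + 2β)² - α²) / 4`, one finds
`16 · Q = (t² + 4β² - α² + 4)² - 16 - 16β²t²`, a quadratic in `t²` whose roots are
`α² + 4β² - 4 ± 4s` with `s² = (α² - 4)β² + 1`. Hence `Q(χ) = 0` exactly when
`t ∈ {±s₁, ±s₂}`. -/

open Complex

/-- The quartic obtained by clearing denominators in
`1 + 1/((χ+β)(χ+α+β)) + 1/((χ-β)(χ+α-β)) = 0`. -/
noncomputable def ABquartic (α : ℂ) (β : ℝ) (χ : ℂ) : ℂ :=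
  (χ + β) * (χ + α + β) * (χ - β) * (χ + α - β)
    + (χ - β) * (χ + α - β) + (χ + β) * (χ + α + β)

theorem mul_sq_sub_sq_eq_zero_iff {R : Type*} [CommRing R] [NoZeroDivisors R] {t a b : R} :
    (t ^ 2 - a ^ 2) * (t ^ 2 - b ^ 2) = 0 ↔ t = a ∨ t = -a ∨ t = b ∨ t = -b := by
  simp only [mul_eq_zero, sub_eq_zero, sq_eq_sq_iff_eq_or_eq_neg, or_assoc]

theorem sixteen_mul_ABquartic (α : ℂ) (β : ℝ) {s : ℂ} (hs : s ^ 2 = (α ^ 2 - 4) * (β : ℂ) ^ 2 + 1)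
    (χ : ℂ) :
    16 * ABquartic α β χ =
      ((2 * χ + α) ^ 2 - (α ^ 2 + 4 * (β : ℂ) ^ 2 - 4 + 4 * s)) *
        ((2 * χ + α) ^ 2 - (α ^ 2 + 4 * (β : ℂ) ^ 2 - 4 - 4 * s)) := by
  unfold ABquartic
  linear_combination 16 * hs

theorem ABquartic_eq_zero_iff (α : ℂ) (β : ℝ) {s s₁ s₂ : ℂ}
    (hs : s ^ 2 = (α ^ 2 - 4) * (β : ℂ) ^ 2 + 1)
    (hs₁ : s₁ ^ 2 = α ^ 2 + 4 * (β : ℂ) ^ 2 - 4 + 4 * s)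
    (hs₂ : s₂ ^ 2 = α ^ 2 + 4 * (β : ℂ) ^ 2 - 4 - 4 * s) (χ : ℂ) :
    ABquartic α β χ = 0 ↔
      2 * χ + α = s₁ ∨ 2 * χ + α = -s₁ ∨ 2 * χ + α = s₂ ∨ 2 * χ + α = -s₂ := by
  rw [← mul_eq_zero_iff_left (by norm_num : (16 : ℂ) ≠ 0), sixteen_mul_ABquartic α β hs,
    ← hs₁, ← hs₂, mul_sq_sub_sq_eq_zero_iff]

theorem AB_quartic_roots (β : ℝ) (α : ℂ)
    (s : ℂ) (hs : s ^ 2 = (α ^ 2 - 4) * (β : ℂ) ^ 2 + 1)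
    (s₁ : ℂ) (hs₁ : s₁ ^ 2 = α ^ 2 + 4 * (β : ℂ) ^ 2 - 4 + 4 * s)
    (s₂ : ℂ) (hs₂ : s₂ ^ 2 = α ^ 2 + 4 * (β : ℂ) ^ 2 - 4 - 4 * s) :
    (ABquartic α β (-α / 2 + s₁ / 2) = 0 ∧
     ABquartic α β (-α / 2 - s₁ / 2) = 0 ∧
     ABquartic α β (-α / 2 + s₂ / 2) = 0 ∧
     ABquartic α β (-α / 2 - s₂ / 2) = 0) ∧
    ∀ χ : ℂ, ABquartic α β χ = 0 →
      χ = -α / 2 + s₁ / 2 ∨ χ = -α / 2 - s₁ / 2 ∨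
      χ = -α / 2 + s₂ / 2 ∨ χ = -α / 2 - s₂ / 2 := by
  have hroot := ABquartic_eq_zero_iff α β hs hs₁ hs₂
  refine ⟨⟨?_, ?_, ?_, ?_⟩, fun χ hχ => ?_⟩
  · exact (hroot _).2 (Or.inl (by ring))
  · exact (hroot _).2 (Or.inr <| Or.inl (by ring))
  · exact (hroot _).2 (Or.inr <| Or.inr <| Or.inl (by ring))
  · exact (hroot _).2 (Or.inr <| Or.inr <| Or.inr (by ring))
  · rcases (hroot χ).1 hχ with h | h | h | h
    · exact Or.inl (by linear_combination h / 2)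
    · exact Or.inr <| Or.inl (by linear_combination h / 2)
    · exact Or.inr <| Or.inr <| Or.inl (by linear_combination h / 2)
    · exact Or.inr <| Or.inr <| Or.inr (by linear_combination h / 2)
end

section
/- Let β > 0 be a real number and α a real number with |α| > 2β. Then the quartic polynomial P(χ) = (χ+β)(χ+α+β)(χ-β)(χ+α-β) + (χ-β)(χ+α-β) + (χ+β)(χ+α+β) has at least two real roots: one in the open interval (-β, β) and one in the open interval (-(β+α), β-α) (interpreted as the interval between the two endpoints). -/
/-!
The quartic takes the values `2β(2β - α)` at `-β` and `2β(2β + α)` at `β`, whose product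
`4β²(4β² - α²)` is negative once `|α| > 2β`; the intermediate value theorem gives a root in
`(-β, β)`. The quartic is invariant under the reflection `χ ↦ -α - χ`, which maps `(-β, β)` onto
`(-(β + α), β - α)`, so the reflected root lies in the second interval.
-/

/-- The cleared-denominator quartic for the two-component AB condition, real version. -/
def ABquarticR (α β χ : ℝ) : ℝ :=
  (χ + β) * (χ + α + β) * (χ - β) * (χ + α - β)
    + (χ - β) * (χ + α - β) + (χ + β) * (χ + α + β)

open Set

theorem exists_mem_Ioo_eq_zero_of_mul_neg {α : Type*} [ConditionallyCompleteLinearOrder α]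
    [TopologicalSpace α] [OrderTopology α] [DenselyOrdered α] {a b : α} {f : α → ℝ}
    (hab : a ≤ b) (hf : ContinuousOn f (Icc a b)) (h : f a * f b < 0) :
    ∃ x ∈ Ioo a b, f x = 0 := by
  rcases mul_neg_iff.mp h with ⟨ha, hb⟩ | ⟨ha, hb⟩
  · exact intermediate_value_Ioo' hab hf ⟨hb, ha⟩
  · exact intermediate_value_Ioo hab hf ⟨ha, hb⟩

theorem continuous_ABquarticR (α β : ℝ) : Continuous (ABquarticR α β) := by
  unfold ABquarticR
  fun_prop

theorem ABquarticR_neg_sub (α β χ : ℝ) : ABquarticR α β (-α - χ) = ABquarticR α β χ := by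
  unfold ABquarticR
  ring

theorem ABquarticR_neg_mul_self (α β : ℝ) :
    ABquarticR α β (-β) * ABquarticR α β β = 4 * β ^ 2 * (4 * β ^ 2 - α ^ 2) := by
  unfold ABquarticR
  ring

theorem AB_quartic_real_roots (β α : ℝ) (hβ : 0 < β) (hα : 2 * β < |α|) :
    (∃ χ ∈ Set.Ioo (-β) β, ABquarticR α β χ = 0) ∧
    (∃ χ ∈ Set.Ioo (min (-(β + α)) (β - α)) (max (-(β + α)) (β - α)),
      ABquarticR α β χ = 0) := by
  have hα_sq : 4 * β ^ 2 < α ^ 2 := by nlinarith [sq_abs α]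
  obtain ⟨χ, hχ, hroot⟩ : ∃ χ ∈ Ioo (-β) β, ABquarticR α β χ = 0 := by
    refine exists_mem_Ioo_eq_zero_of_mul_neg (by linarith)
      (continuous_ABquarticR α β).continuousOn ?_
    rw [ABquarticR_neg_mul_self]
    exact mul_neg_of_pos_of_neg (by positivity) (by linarith)
  refine ⟨⟨χ, hχ, hroot⟩, -α - χ, ?_, by rw [ABquarticR_neg_sub, hroot]⟩
  rw [min_eq_left (by linarith), max_eq_right (by linarith)]
  exact ⟨by linarith [hχ.2], by linarith [hχ.1]⟩
end

section
/- Let 0 < β < 1/2 and let α be a real number with 0 < |α| < 2β. Then (α² - 4)β² + 1 > 0 and α² + 4β² - 4 + 4√((α²-4)β²+1) < 0; consequently χ_{1,±} = -α/2 ± (1/2)√(α² + 4β² - 4 + 4√((α²-4)β²+1)) form a pair of non-real complex conjugate numbers. -/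
/-! With `D = (α² - 4)β² + 1`, the inequality `E < 0` amounts to `√D < (4 - α² - 4β²)/4`,
and squaring reduces it to the identity
`((4 - α² - 4β²)/4)² - D = (α²/4 - β²)² + (4β² - α²)/2`,
whose right side is positive as soon as `α² < 4β²`. Then `√(-E) > 0` is twice the
imaginary part of `χ₁,₊`. -/

open Complex

theorem akhmediev_discr_pos (α β : ℝ) (hβ : 4 * β ^ 2 < 1) : 0 < (α ^ 2 - 4) * β ^ 2 + 1 := by
  nlinarith [mul_nonneg (sq_nonneg α) (sq_nonneg β)]

theorem sqrt_akhmediev_discr_lt (α β : ℝ) (hαβ : α ^ 2 < 4 * β ^ 2) (hβ : 4 * β ^ 2 < 1) :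
    Real.sqrt ((α ^ 2 - 4) * β ^ 2 + 1) < (4 - α ^ 2 - 4 * β ^ 2) / 4 := by
  have hsq : (α ^ 2 - 4) * β ^ 2 + 1 < ((4 - α ^ 2 - 4 * β ^ 2) / 4) ^ 2 := by
    have key : ((4 - α ^ 2 - 4 * β ^ 2) / 4) ^ 2 - ((α ^ 2 - 4) * β ^ 2 + 1)
        = (α ^ 2 / 4 - β ^ 2) ^ 2 + (4 * β ^ 2 - α ^ 2) / 2 := by ring
    nlinarith [sq_nonneg (α ^ 2 / 4 - β ^ 2)]
  exact (Real.sqrt_lt' (by nlinarith)).mpr hsq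

theorem conj_neg_half_add_mul_I (a s : ℝ) :
    starRingEnd ℂ (-(a : ℂ) / 2 + (1 / 2) * (s : ℂ) * I) = -(a : ℂ) / 2 - (1 / 2) * (s : ℂ) * I := by
  simp only [map_add, map_mul, map_div₀, map_neg, map_one, map_ofNat, conj_ofReal, conj_I]
  ring

theorem im_neg_half_add_mul_I (a s : ℝ) : (-(a : ℂ) / 2 + (1 / 2) * (s : ℂ) * I).im = s / 2 := by
  simp [div_eq_inv_mul]

theorem chi1_complex_conjugate_pair_general (β α : ℝ)
    (hβ : β < 1 / 2) (hα : |α| < 2 * β) :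
    (α ^ 2 - 4) * β ^ 2 + 1 > 0 ∧
    α ^ 2 + 4 * β ^ 2 - 4 + 4 * Real.sqrt ((α ^ 2 - 4) * β ^ 2 + 1) < 0 ∧
    (let E : ℝ := α ^ 2 + 4 * β ^ 2 - 4 + 4 * Real.sqrt ((α ^ 2 - 4) * β ^ 2 + 1)
     let χp : ℂ := -(α : ℂ) / 2 + (1 / 2) * (Real.sqrt (-E) : ℂ) * Complex.I
     let χm : ℂ := -(α : ℂ) / 2 - (1 / 2) * (Real.sqrt (-E) : ℂ) * Complex.I
     χm = (starRingEnd ℂ) χp ∧ χp.im ≠ 0) := by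
  have hβ0 : 0 < β := by linarith [abs_nonneg α]
  have hαβ : α ^ 2 < 4 * β ^ 2 := by
    nlinarith [sq_abs α, pow_lt_pow_left₀ hα (abs_nonneg α) two_ne_zero]
  have hβ2 : 4 * β ^ 2 < 1 := by nlinarith
  have hE : α ^ 2 + 4 * β ^ 2 - 4 + 4 * Real.sqrt ((α ^ 2 - 4) * β ^ 2 + 1) < 0 := by
    linarith [sqrt_akhmediev_discr_lt α β hαβ hβ2]
  refine ⟨akhmediev_discr_pos α β hβ2, hE, (conj_neg_half_add_mul_I _ _).symm, ?_⟩
  rw [im_neg_half_add_mul_I]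
  exact (div_pos (Real.sqrt_pos.mpr (neg_pos.mpr hE)) two_pos).ne'

theorem chi1_complex_conjugate_pair (β α : ℝ)
    (hβ0 : 0 < β) (hβ : β < 1 / 2) (hα0 : 0 < |α|) (hα : |α| < 2 * β) :
    (α ^ 2 - 4) * β ^ 2 + 1 > 0 ∧
    α ^ 2 + 4 * β ^ 2 - 4 + 4 * Real.sqrt ((α ^ 2 - 4) * β ^ 2 + 1) < 0 ∧
    (let E : ℝ := α ^ 2 + 4 * β ^ 2 - 4 + 4 * Real.sqrt ((α ^ 2 - 4) * β ^ 2 + 1)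
     let χp : ℂ := -(α : ℂ) / 2 + (1 / 2) * (Real.sqrt (-E) : ℂ) * Complex.I
     let χm : ℂ := -(α : ℂ) / 2 - (1 / 2) * (Real.sqrt (-E) : ℂ) * Complex.I
     χm = (starRingEnd ℂ) χp ∧ χp.im ≠ 0) :=
  chi1_complex_conjugate_pair_general β α hβ hα
end

section
/- Let α be a real number with 0 < |α| < √3 and set β = (1/2)√(1+α²), a₁ = a₂ = 1, b₁ = β, b₂ = -β. Then there exists a complex number χ with nonzero imaginary part such that χ, χ+α, and χ+2α all satisfy the same characteristic equation z - λ - 1/(z+β) - 1/(z-β) = 0 for a common complex λ; equivalently, both 1 + 1/((χ+β)(χ+α+β)) + 1/((χ-β)(χ+α-β)) = 0 and 1 + 1/((χ+α+β)(χ+2α+β)) + 1/((χ+α-β)(χ+2α-β)) = 0 hold. -/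
open Complex

/-!
Clearing denominators, `z` solves `z - λ - 1/(z+β) - 1/(z-β) = 0` iff it is a root of the cubic
`(z - λ)(z² - β²) - 2z`. Comparing coefficients with `(z - χ)(z - χ - α)(z - χ - 2α)` (Vieta) forces
`λ = 3(χ + α)`, `4β² = 1 + α²` and `4(χ + α)² = α² - 3`; for real `0 < |α| < √3` the last equation
has the non-real solutions `χ = -α ± (i/2)√(3 - α²)`. The two reciprocal-sum conditions are the
divided differences `(f z - f w)/(z - w)` of `f z = z - 1/(z+β) - 1/(z-β)` along the progression.
-/

section CharacteristicEquation

variable {K : Type*} [Field K]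

lemma char_eq_iff_cubic_eq_zero {β lam z : K} (hp : z + β ≠ 0) (hm : z - β ≠ 0) :
    z - lam - 1 / (z + β) - 1 / (z - β) = 0 ↔ (z - lam) * (z + β) * (z - β) - 2 * z = 0 := by
  have h : z - lam - 1 / (z + β) - 1 / (z - β)
      = ((z - lam) * (z + β) * (z - β) - 2 * z) / ((z + β) * (z - β)) := by
    field_simp
    ring
  rw [h, div_eq_zero_iff, or_iff_left (mul_ne_zero hp hm)]

lemma char_sub_char_eq_mul {β z w : K} (hzp : z + β ≠ 0) (hzm : z - β ≠ 0)
    (hwp : w + β ≠ 0) (hwm : w - β ≠ 0) :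
    (z - 1 / (z + β) - 1 / (z - β)) - (w - 1 / (w + β) - 1 / (w - β))
      = (z - w) * (1 + 1 / ((z + β) * (w + β)) + 1 / ((z - β) * (w - β))) := by
  field_simp
  ring

lemma divided_difference_eq_zero_of_char_eq {β lam z w : K} (hzw : z ≠ w)
    (hzp : z + β ≠ 0) (hzm : z - β ≠ 0) (hwp : w + β ≠ 0) (hwm : w - β ≠ 0)
    (hz : z - lam - 1 / (z + β) - 1 / (z - β) = 0) (hw : w - lam - 1 / (w + β) - 1 / (w - β) = 0) :
    1 + 1 / ((z + β) * (w + β)) + 1 / ((z - β) * (w - β)) = 0 := by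
  have h := char_sub_char_eq_mul hzp hzm hwp hwm
  rw [show (z - 1 / (z + β) - 1 / (z - β)) - (w - 1 / (w + β) - 1 / (w - β)) = 0 by
    linear_combination hz - hw] at h
  exact (mul_eq_zero.mp h.symm).resolve_left (sub_ne_zero.mpr hzw)

variable [CharZero K]

lemma cubic_eq_prod_of_progression {α β χ : K} (hβ : β ^ 2 = (1 + α ^ 2) / 4)
    (hχ : (χ + α) ^ 2 = (α ^ 2 - 3) / 4) (z : K) :
    (z - 3 * (χ + α)) * (z + β) * (z - β) - 2 * z
      = (z - χ) * (z - (χ + α)) * (z - (χ + 2 * α)) := by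
  linear_combination (3 * (χ + α) - z) * hβ + (χ + α - 3 * z) * hχ

lemma char_eq_of_mem_progression {α β χ z : K} (hβ : β ^ 2 = (1 + α ^ 2) / 4)
    (hχ : (χ + α) ^ 2 = (α ^ 2 - 3) / 4) (hz : z ∈ ({χ, χ + α, χ + 2 * α} : Set K))
    (hp : z + β ≠ 0) (hm : z - β ≠ 0) :
    z - 3 * (χ + α) - 1 / (z + β) - 1 / (z - β) = 0 := by
  rw [char_eq_iff_cubic_eq_zero hp hm, cubic_eq_prod_of_progression hβ hχ]
  rcases hz with rfl | rfl | rfl <;> simp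

end CharacteristicEquation

namespace Complex

lemma add_ofReal_ne_zero {z : ℂ} (hz : z.im ≠ 0) (r : ℝ) : z + r ≠ 0 :=
  fun h => hz (by simpa using congrArg im h)

lemma sub_ofReal_ne_zero {z : ℂ} (hz : z.im ≠ 0) (r : ℝ) : z - r ≠ 0 :=
  fun h => hz (by simpa using congrArg im h)

lemma exists_im_pos_sq_eq_ofReal {x : ℝ} (hx : x < 0) : ∃ c : ℂ, 0 < c.im ∧ c ^ 2 = x :=
  ⟨Real.sqrt (-x) * I, by simpa using hx, by
    rw [mul_pow, I_sq, ← ofReal_pow, Real.sq_sqrt (by linarith)]; push_cast; ring⟩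

end Complex

theorem triple_root_configuration_exists (α : ℝ)
    (hα0 : 0 < |α|) (hα : |α| < Real.sqrt 3) :
    let β : ℝ := (1 / 2) * Real.sqrt (1 + α ^ 2)
    ∃ χ : ℂ, χ.im ≠ 0 ∧
      (∃ lam : ℂ, ∀ z ∈ ({χ, χ + (α : ℂ), χ + 2 * (α : ℂ)} : Set ℂ),
        z - lam - 1 / (z + (β : ℂ)) - 1 / (z - (β : ℂ)) = 0) ∧
      (1 + 1 / ((χ + (β : ℂ)) * (χ + (α : ℂ) + (β : ℂ)))
         + 1 / ((χ - (β : ℂ)) * (χ + (α : ℂ) - (β : ℂ))) = 0) ∧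
      (1 + 1 / ((χ + (α : ℂ) + (β : ℂ)) * (χ + 2 * (α : ℂ) + (β : ℂ)))
         + 1 / ((χ + (α : ℂ) - (β : ℂ)) * (χ + 2 * (α : ℂ) - (β : ℂ))) = 0) := by
  intro β
  have hα2 : α ^ 2 < 3 := by
    rw [← sq_abs]; exact (Real.lt_sqrt (abs_nonneg α)).mp hα
  have hβ : (β : ℂ) ^ 2 = (1 + (α : ℂ) ^ 2) / 4 := by
    have : β ^ 2 = (1 + α ^ 2) / 4 := by
      simp only [β]; rw [mul_pow, Real.sq_sqrt (by positivity)]; ring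
    exact_mod_cast this
  obtain ⟨c, hc_im, hc⟩ := exists_im_pos_sq_eq_ofReal (x := (α ^ 2 - 3) / 4) (by linarith)
  set χ : ℂ := c - α
  set S : Set ℂ := {χ, χ + (α : ℂ), χ + 2 * (α : ℂ)}
  have him : ∀ z ∈ S, z.im ≠ 0 := by
    rintro z (rfl | rfl | rfl) <;> simpa [χ] using hc_im.ne'
  have hp : ∀ z ∈ S, z + β ≠ 0 := fun z hz => add_ofReal_ne_zero (him z hz) β
  have hm : ∀ z ∈ S, z - β ≠ 0 := fun z hz => sub_ofReal_ne_zero (him z hz) β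
  have hchar : ∀ z ∈ S, z - 3 * (χ + α) - 1 / (z + β) - 1 / (z - β) = 0 := fun z hz =>
    char_eq_of_mem_progression hβ (by simp [χ, hc]) hz (hp z hz) (hm z hz)
  have h₀ : χ ∈ S := by simp [S]
  have h₁ : χ + α ∈ S := by simp [S]
  have h₂ : χ + 2 * α ∈ S := by simp [S]
  have hα' : α ≠ 0 := abs_pos.mp hα0
  refine ⟨χ, him χ h₀, ⟨_, hchar⟩, ?_, ?_⟩
  · exact divided_difference_eq_zero_of_char_eq (by simpa using hα')
      (hp _ h₀) (hm _ h₀) (hp _ h₁) (hm _ h₁) (hchar _ h₀) (hchar _ h₁)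
  · exact divided_difference_eq_zero_of_char_eq (by simpa [two_mul] using hα')
      (hp _ h₁) (hm _ h₁) (hp _ h₂) (hm _ h₂) (hchar _ h₁) (hchar _ h₂)
end
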